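/- (Theorem 2, main result.) Let V, W', S, Q, R, μ₁, μ₂, μ₃, M_v, and the MAD iterates Y^{(t)} be as in the MAD iteration, and suppose that for some k ≥ 0 every row of Q and of R has ℓ₁-norm at most k. Fix positive integers w, d, a probability space Ω, and random hash functions h_1, …, h_d : Ω → (Fin m → Fin w) that are mutually independent, each pairwise uniform in the sense that for all distinct labels ℓ, ℓ', P(h_j(ℓ) = h_j(ℓ')) ≤ 1/w. Let Ŷ^{(t)}_{vℓ} denote the count-min estimate of Y^{(t)}_{vℓ} obtained from the count-min sketch of the row Y^{(t)}_v. Let ε > 0 and δ ∈ (0,1). If w ≥ e·k/ε and d ≥ ln(m/δ), then for every node v ∈ V and every iteration t ≥ 0, with probability at least 1 − δ, simultaneously for every label ℓ, Y^{(t)}_{vℓ} ≤ Ŷ^{(t)}_{vℓ} ≤ Y^{(t)}_{vℓ} + ε. -/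

import Mathlib

/-!
Every MAD iterate is a normalized nonnegative combination of rows of `Q`, `R` and earlier
iterates, so by induction each row `Y^{(t)}_v` stays nonnegative with ℓ₁-mass at most `k`.
The guarantee is then the count-min bound for such a vector: the estimate never undercounts,
and it overcounts label `ℓ` by `ε` in row `j` only if the mass colliding with `ℓ` under `h_j`
is at least `ε`. Pairwise uniformity bounds the expected colliding mass by `k / w ≤ ε / e`,
so by Markov a row fails with probability at most `1 / e`; by independence all `d` rows fail
with probability at most `e^{-d} ≤ δ / m`, and a union bound over the `m` labels concludes.
-/

open Finset MeasureTheory ProbabilityTheory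

/-- The count-min sketch of width `w` and depth `d` for `y : Fin m → ℝ`. -/
noncomputable def cmSketch {m w d : ℕ} (h : Fin d → Fin m → Fin w)
    (y : Fin m → ℝ) (j : Fin d) (c : Fin w) : ℝ :=
  ∑ i ∈ Finset.univ.filter (fun i => h j i = c), y i

/-- The count-min estimate of coordinate `ℓ`: `ŷ_ℓ = min_j S(y)_{j, h j ℓ}`. -/
noncomputable def cmEstimate {m w d : ℕ} (hd : 0 < d) (h : Fin d → Fin m → Fin w)
    (y : Fin m → ℝ) (ℓ : Fin m) : ℝ :=
  Finset.univ.inf' ⟨⟨0, hd⟩, Finset.mem_univ _⟩ (fun j => cmSketch h y j (h j ℓ))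

theorem nonneg_and_sum_le_of_eq_weighted_mean {ι κ : Type*} [Fintype ι] [Fintype κ]
    {a e c k : ℝ} {b : ι → ℝ}
    {q r z : κ → ℝ} {x : ι → κ → ℝ} (ha : 0 ≤ a) (he : 0 ≤ e) (hb : 0 ≤ b) (hc : 0 ≤ c)
    (hpos : 0 < a + e * ∑ i, b i + c) (hq : 0 ≤ q) (hx : ∀ i, 0 ≤ x i) (hr : 0 ≤ r)
    (hqk : ∑ ℓ, q ℓ ≤ k) (hxk : ∀ i, ∑ ℓ, x i ℓ ≤ k) (hrk : ∑ ℓ, r ℓ ≤ k)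
    (hz : ∀ ℓ, z ℓ = 1 / (a + e * ∑ i, b i + c) * (a * q ℓ + e * ∑ i, b i * x i ℓ + c * r ℓ)) :
    0 ≤ z ∧ ∑ ℓ, z ℓ ≤ k := by
  refine ⟨fun ℓ => ?_, ?_⟩
  · rw [hz]
    exact mul_nonneg (one_div_pos.2 hpos).le <| add_nonneg (add_nonneg (mul_nonneg ha (hq ℓ))
      (mul_nonneg he (sum_nonneg fun i _ => mul_nonneg (hb i) (hx i ℓ)))) (mul_nonneg hc (hr ℓ))
  have hmass : ∑ ℓ, (a * q ℓ + e * ∑ i, b i * x i ℓ + c * r ℓ)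
      = a * ∑ ℓ, q ℓ + e * ∑ i, b i * ∑ ℓ, x i ℓ + c * ∑ ℓ, r ℓ := by
    simp only [sum_add_distrib, ← mul_sum]
    rw [sum_comm]
    simp only [mul_sum]
  have hmix : ∑ i, b i * ∑ ℓ, x i ℓ ≤ (∑ i, b i) * k := by
    rw [sum_mul]
    exact sum_le_sum fun i _ => mul_le_mul_of_nonneg_left (hxk i) (hb i)
  calc ∑ ℓ, z ℓ
      = 1 / (a + e * ∑ i, b i + c) * (a * ∑ ℓ, q ℓ + e * ∑ i, b i * ∑ ℓ, x i ℓ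
          + c * ∑ ℓ, r ℓ) := by simp only [hz, ← mul_sum, hmass]
    _ ≤ 1 / (a + e * ∑ i, b i + c) * ((a + e * ∑ i, b i + c) * k) := by
        gcongr
        nlinarith [mul_le_mul_of_nonneg_left hqk ha, mul_le_mul_of_nonneg_left hmix he,
          mul_le_mul_of_nonneg_left hrk hc]
    _ = k := by field_simp

theorem mad_iterate_nonneg_and_sum_le {V : Type*} [Fintype V] [DecidableEq V] {m : ℕ}
    {W' : V → V → ℝ} {S M : V → ℝ} {Q R : V → Fin m → ℝ} {μ₁ μ₂ μ₃ k : ℝ}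
    {Y : ℕ → V → Fin m → ℝ} (hW : ∀ u v, 0 ≤ W' u v) (hWdiag : ∀ v, W' v v = 0)
    (hS : ∀ v, 0 ≤ S v) (hQ : ∀ v, 0 ≤ Q v) (hR : ∀ v, 0 ≤ R v)
    (hμ₁ : 0 ≤ μ₁) (hμ₂ : 0 ≤ μ₂) (hμ₃ : 0 < μ₃)
    (hM : ∀ v, M v = μ₁ * S v
        + μ₂ * ∑ u ∈ Finset.univ.filter (fun u => u ≠ v), (W' u v + W' v u) + μ₃)
    (hY0 : Y 0 = Q)
    (hYsucc : ∀ t v ℓ, Y (t + 1) v ℓ = (1 / M v) * (μ₁ * S v * Q v ℓ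
        + μ₂ * ∑ u, (W' u v + W' v u) * Y t u ℓ + μ₃ * R v ℓ))
    (hQk : ∀ v, ∑ ℓ, Q v ℓ ≤ k) (hRk : ∀ v, ∑ ℓ, R v ℓ ≤ k) (t : ℕ) (v : V) :
    0 ≤ Y t v ∧ ∑ ℓ, Y t v ℓ ≤ k := by
  induction t generalizing v with
  | zero => exact hY0 ▸ ⟨hQ v, hQk v⟩
  | succ t ih =>
    have hM' : M v = μ₁ * S v + μ₂ * ∑ u, (W' u v + W' v u) + μ₃ := by
      rw [hM, sum_filter_of_ne]
      intro u _ hu huv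
      exact hu (by simp [huv, hWdiag])
    have hweights : 0 ≤ fun u => W' u v + W' v u := fun u => add_nonneg (hW u v) (hW v u)
    have hpos : 0 < μ₁ * S v + μ₂ * ∑ u, (W' u v + W' v u) + μ₃ := by
      have := sum_nonneg fun u (_ : u ∈ univ) => hweights u
      have := hS v
      positivity
    exact nonneg_and_sum_le_of_eq_weighted_mean (mul_nonneg hμ₁ (hS v)) hμ₂ hweights hμ₃.le
      hpos (hQ v) (fun u => (ih u).1) (hR v) (hQk v) (fun u => (ih u).2) (hRk v)
      fun ℓ => by rw [hYsucc, hM']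

section CountMin

variable {m w d : ℕ}

noncomputable def collisionMass (g : Fin m → Fin w) (y : Fin m → ℝ) (ℓ : Fin m) : ℝ :=
  ∑ i ∈ (univ.erase ℓ).filter (fun i => g i = g ℓ), y i

theorem cmSketch_eq_add_collisionMass (h : Fin d → Fin m → Fin w) (y : Fin m → ℝ)
    (j : Fin d) (ℓ : Fin m) : cmSketch h y j (h j ℓ) = y ℓ + collisionMass (h j) y ℓ := by
  rw [cmSketch, collisionMass, sum_filter, sum_filter, ← add_sum_erase _ _ (mem_univ ℓ),
    if_pos rfl]

theorem le_cmEstimate (hd : 0 < d) (h : Fin d → Fin m → Fin w) {y : Fin m → ℝ} (hy : 0 ≤ y)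
    (ℓ : Fin m) : y ℓ ≤ cmEstimate hd h y ℓ :=
  le_inf' _ _ fun j _ => single_le_sum (fun i _ => hy i) (by simp)

theorem cmEstimate_le_add_of_collisionMass_le (hd : 0 < d) (h : Fin d → Fin m → Fin w)
    {y : Fin m → ℝ} {ℓ : Fin m} {ε : ℝ} (j : Fin d) (hj : collisionMass (h j) y ℓ ≤ ε) :
    cmEstimate hd h y ℓ ≤ y ℓ + ε :=
  calc cmEstimate hd h y ℓ ≤ cmSketch h y j (h j ℓ) := inf'_le _ (mem_univ j)
    _ = y ℓ + collisionMass (h j) y ℓ := cmSketch_eq_add_collisionMass h y j ℓ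
    _ ≤ y ℓ + ε := by linarith

end CountMin

section CountMinProbability

variable {Ω : Type*} [MeasurableSpace Ω] {μ : Measure Ω} {m w d : ℕ}

theorem lintegral_collisionMass_le {g : Ω → Fin m → Fin w} (hg : Measurable g)
    (hpair : ∀ i ℓ, i ≠ ℓ → μ {ω | g ω i = g ω ℓ} ≤ 1 / w) {y : Fin m → ℝ} (hy : 0 ≤ y)
    (ℓ : Fin m) :
    ∫⁻ ω, ENNReal.ofReal (collisionMass (g ω) y ℓ) ∂μ ≤ ENNReal.ofReal (∑ i, y i) / w := by
  have hcoll : ∀ i, MeasurableSet {ω | g ω i = g ω ℓ} := fun i =>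
    hg (Set.toFinite {f : Fin m → Fin w | f i = f ℓ}).measurableSet
  have hsum : ∀ ω, ENNReal.ofReal (collisionMass (g ω) y ℓ) = ∑ i ∈ univ.erase ℓ,
      {ω | g ω i = g ω ℓ}.indicator (fun _ => ENNReal.ofReal (y i)) ω := by
    intro ω
    rw [collisionMass, ENNReal.ofReal_sum_of_nonneg fun i _ => hy i, sum_filter]
    refine sum_congr rfl fun i _ => ?_
    by_cases hi : g ω i = g ω ℓ <;> simp [hi]
  calc ∫⁻ ω, ENNReal.ofReal (collisionMass (g ω) y ℓ) ∂μ
      = ∑ i ∈ univ.erase ℓ, ENNReal.ofReal (y i) * μ {ω | g ω i = g ω ℓ} := by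
        simp_rw [hsum]
        rw [lintegral_finsetSum _ fun i _ => measurable_const.indicator (hcoll i)]
        exact sum_congr rfl fun i _ => lintegral_indicator_const (hcoll i) _
    _ ≤ ∑ i ∈ univ.erase ℓ, ENNReal.ofReal (y i) * (1 / w) :=
        sum_le_sum fun i hi => mul_le_mul_right (hpair i ℓ (ne_of_mem_erase hi)) _
    _ ≤ ∑ i, ENNReal.ofReal (y i) * (1 / w) :=
        sum_le_sum_of_subset (erase_subset ℓ univ)
    _ = ENNReal.ofReal (∑ i, y i) / w := by
        rw [← sum_mul, ENNReal.ofReal_sum_of_nonneg fun i _ => hy i, mul_one_div]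

theorem measure_le_collisionMass_le {g : Ω → Fin m → Fin w} (hg : Measurable g)
    (hpair : ∀ i ℓ, i ≠ ℓ → μ {ω | g ω i = g ω ℓ} ≤ 1 / w) {y : Fin m → ℝ} (hy : 0 ≤ y)
    (ℓ : Fin m) {ε : ℝ} (hε : 0 < ε) :
    μ {ω | ε ≤ collisionMass (g ω) y ℓ} ≤ ENNReal.ofReal (∑ i, y i) / w / ENNReal.ofReal ε :=
  calc μ {ω | ε ≤ collisionMass (g ω) y ℓ}
      ≤ μ {ω | ENNReal.ofReal ε ≤ ENNReal.ofReal (collisionMass (g ω) y ℓ)} :=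
        measure_mono fun ω hω => ENNReal.ofReal_le_ofReal hω
    _ ≤ (∫⁻ ω, ENNReal.ofReal (collisionMass (g ω) y ℓ) ∂μ) / ENNReal.ofReal ε :=
        meas_ge_le_lintegral_div (((measurable_of_finite fun f =>
            ENNReal.ofReal (collisionMass f y ℓ)).comp hg).aemeasurable)
          (ENNReal.ofReal_pos.2 hε).ne' ENNReal.ofReal_ne_top
    _ ≤ ENNReal.ofReal (∑ i, y i) / w / ENNReal.ofReal ε := by
        gcongr
        exact lintegral_collisionMass_le hg hpair hy ℓ

theorem measure_le_collisionMass_le_exp_neg_one {g : Ω → Fin m → Fin w} (hg : Measurable g)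
    (hpair : ∀ i ℓ, i ≠ ℓ → μ {ω | g ω i = g ω ℓ} ≤ 1 / w) {y : Fin m → ℝ} (hy : 0 ≤ y)
    (ℓ : Fin m) {k ε : ℝ} (hyk : ∑ i, y i ≤ k) (hw : 0 < w) (hε : 0 < ε)
    (hwε : Real.exp 1 * k / ε ≤ w) :
    μ {ω | ε ≤ collisionMass (g ω) y ℓ} ≤ ENNReal.ofReal (Real.exp (-1)) := by
  refine (measure_le_collisionMass_le hg hpair hy ℓ hε).trans ?_
  have hw' : (0 : ℝ) < w := Nat.cast_pos.2 hw
  rw [← ENNReal.ofReal_natCast, ← ENNReal.ofReal_div_of_pos hw', ← ENNReal.ofReal_div_of_pos hε]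
  refine ENNReal.ofReal_le_ofReal ?_
  rw [div_le_iff₀ hε] at hwε
  rw [div_div, div_le_iff₀ (by positivity), Real.exp_neg, ← div_eq_inv_mul,
    le_div_iff₀ (Real.exp_pos 1)]
  nlinarith [Real.exp_pos 1]

theorem measure_forall_le_collisionMass_le {h : Fin d → Ω → Fin m → Fin w}
    (hmeas : ∀ j, Measurable (h j)) (hindep : iIndepFun h μ)
    (hpair : ∀ (j : Fin d) (ℓ ℓ' : Fin m), ℓ ≠ ℓ' → μ {ω | h j ω ℓ = h j ω ℓ'} ≤ 1 / w)
    {y : Fin m → ℝ} (hy : 0 ≤ y) (ℓ : Fin m) {k ε : ℝ} (hyk : ∑ i, y i ≤ k) (hw : 0 < w)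
    (hε : 0 < ε) (hwε : Real.exp 1 * k / ε ≤ w) :
    μ {ω | ∀ j, ε ≤ collisionMass (h j ω) y ℓ} ≤ ENNReal.ofReal (Real.exp (-d)) := by
  have hprod : μ {ω | ∀ j, ε ≤ collisionMass (h j ω) y ℓ}
      = ∏ j, μ {ω | ε ≤ collisionMass (h j ω) y ℓ} := by
    have := hindep.measure_inter_preimage_eq_mul univ
      (sets := fun _ => {g | ε ≤ collisionMass g y ℓ}) fun _ _ => (Set.toFinite _).measurableSet
    simpa [Set.preimage, Set.ofPred_forall] using this
  calc μ {ω | ∀ j, ε ≤ collisionMass (h j ω) y ℓ}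
      ≤ ∏ _j : Fin d, ENNReal.ofReal (Real.exp (-1)) := hprod ▸ prod_le_prod' fun j _ =>
        measure_le_collisionMass_le_exp_neg_one (hmeas j) (hpair j) hy ℓ hyk hw hε hwε
    _ = ENNReal.ofReal (Real.exp (-d)) := by
        rw [prod_const, card_univ, Fintype.card_fin,
          ← ENNReal.ofReal_pow (Real.exp_pos _).le, ← Real.exp_nat_mul, mul_neg_one]

end CountMinProbability

theorem natCast_mul_exp_neg_le_of_log_div_le {m : ℕ} {δ x : ℝ} (hδ : 0 < δ)
    (hx : Real.log (m / δ) ≤ x) : m * Real.exp (-x) ≤ δ := by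
  rcases Nat.eq_zero_or_pos m with rfl | hm
  · simpa using hδ.le
  have hexp : (m : ℝ) / δ ≤ Real.exp x :=
    calc (m : ℝ) / δ = Real.exp (Real.log (m / δ)) := (Real.exp_log (by positivity)).symm
      _ ≤ Real.exp x := Real.exp_le_exp.2 hx
  rw [div_le_iff₀ hδ, mul_comm] at hexp
  rwa [Real.exp_neg, ← div_eq_mul_inv, div_le_iff₀ (Real.exp_pos x)]

theorem cmEstimate_error_prob {Ω : Type*} [MeasurableSpace Ω] {μ : Measure Ω}
    [IsProbabilityMeasure μ] {m w d : ℕ} (hw : 0 < w) (hd : 0 < d)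
    {h : Fin d → Ω → Fin m → Fin w} (hmeas : ∀ j, Measurable (h j)) (hindep : iIndepFun h μ)
    (hpair : ∀ (j : Fin d) (ℓ ℓ' : Fin m), ℓ ≠ ℓ' → μ {ω | h j ω ℓ = h j ω ℓ'} ≤ 1 / w)
    {y : Fin m → ℝ} (hy : 0 ≤ y) {k ε δ : ℝ} (hyk : ∑ i, y i ≤ k) (hε : 0 < ε) (hδ : 0 < δ)
    (hwε : Real.exp 1 * k / ε ≤ w) (hdδ : Real.log (m / δ) ≤ d) :
    1 - ENNReal.ofReal δ ≤
      μ {ω | ∀ ℓ, y ℓ ≤ cmEstimate hd (fun j => h j ω) y ℓ ∧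
        cmEstimate hd (fun j => h j ω) y ℓ ≤ y ℓ + ε} := by
  set bad := ⋃ ℓ, {ω | ∀ j, ε ≤ collisionMass (h j ω) y ℓ}
  have hgood : Set.univ \ bad ⊆ {ω | ∀ ℓ, y ℓ ≤ cmEstimate hd (fun j => h j ω) y ℓ ∧
      cmEstimate hd (fun j => h j ω) y ℓ ≤ y ℓ + ε} := by
    intro ω hω ℓ
    simp only [bad, Set.mem_sdiff, Set.mem_iUnion, Set.mem_ofPred_eq, not_exists, not_forall,
      not_le] at hω
    obtain ⟨j, hj⟩ := hω.2 ℓ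
    exact ⟨le_cmEstimate hd _ hy ℓ, cmEstimate_le_add_of_collisionMass_le hd _ j hj.le⟩
  have hbad : μ bad ≤ ENNReal.ofReal δ :=
    calc μ bad ≤ ∑ ℓ, μ {ω | ∀ j, ε ≤ collisionMass (h j ω) y ℓ} :=
          measure_iUnion_fintype_le _ _
      _ ≤ ∑ _ℓ : Fin m, ENNReal.ofReal (Real.exp (-d)) := sum_le_sum fun ℓ _ =>
          measure_forall_le_collisionMass_le hmeas hindep hpair hy ℓ hyk hw hε hwε
      _ = ENNReal.ofReal (m * Real.exp (-d)) := by
          rw [sum_const, card_univ, Fintype.card_fin, nsmul_eq_mul,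
            ENNReal.ofReal_mul (Nat.cast_nonneg _), ENNReal.ofReal_natCast]
      _ ≤ ENNReal.ofReal δ :=
          ENNReal.ofReal_le_ofReal (natCast_mul_exp_neg_le_of_log_div_le hδ hdδ)
  calc 1 - ENNReal.ofReal δ ≤ μ Set.univ - μ bad := by rw [measure_univ]; gcongr
    _ ≤ μ (Set.univ \ bad) := le_measure_sdiff
    _ ≤ _ := measure_mono hgood

theorem mad_sketch_approximation_error_general
    (V : Type*) [Fintype V] [DecidableEq V] (m w d : ℕ)
    (hw : 0 < w) (hd : 0 < d)
    (W' : V → V → ℝ) (hW : ∀ u v, 0 ≤ W' u v) (hWdiag : ∀ v, W' v v = 0)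
    (S : V → ℝ) (hS : ∀ v, S v = 0 ∨ S v = 1)
    (Q R : V → Fin m → ℝ) (hQ : ∀ v ℓ, 0 ≤ Q v ℓ) (hR : ∀ v ℓ, 0 ≤ R v ℓ)
    (μ₁ μ₂ μ₃ : ℝ) (hμ₁ : 0 < μ₁) (hμ₂ : 0 < μ₂) (hμ₃ : 0 < μ₃)
    (M : V → ℝ)
    (hM : ∀ v, M v = μ₁ * S v
        + μ₂ * ∑ u ∈ Finset.univ.filter (fun u => u ≠ v), (W' u v + W' v u)
        + μ₃)
    (Y : ℕ → V → Fin m → ℝ)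
    (hY0 : Y 0 = Q)
    (hYsucc : ∀ t v ℓ, Y (t + 1) v ℓ =
        (1 / M v) * (μ₁ * S v * Q v ℓ
          + μ₂ * ∑ u, (W' u v + W' v u) * Y t u ℓ
          + μ₃ * R v ℓ))
    (k : ℝ)
    (hQk : ∀ v, (∑ ℓ, |Q v ℓ|) ≤ k) (hRk : ∀ v, (∑ ℓ, |R v ℓ|) ≤ k)
    {Ω : Type*} [MeasureSpace Ω] [IsProbabilityMeasure (ℙ : Measure Ω)]
    (h : Fin d → Ω → Fin m → Fin w) (hmeas : ∀ j, Measurable (h j))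
    (hindep : iIndepFun h ℙ)
    (hpair : ∀ (j : Fin d) (ℓ ℓ' : Fin m), ℓ ≠ ℓ' →
        ℙ {ω | h j ω ℓ = h j ω ℓ'} ≤ 1 / w)
    (ε δ : ℝ) (hε : 0 < ε) (hδ0 : 0 < δ)
    (hwε : Real.exp 1 * k / ε ≤ w) (hdδ : Real.log (m / δ) ≤ d) :
    ∀ (v : V) (t : ℕ),
      1 - ENNReal.ofReal δ ≤
        ℙ {ω | ∀ ℓ : Fin m,
                Y t v ℓ ≤ cmEstimate hd (fun j => h j ω) (Y t v) ℓ ∧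
                cmEstimate hd (fun j => h j ω) (Y t v) ℓ ≤ Y t v ℓ + ε} := by
  intro v t
  have hSnonneg : ∀ v, 0 ≤ S v := fun v => (hS v).elim (fun h0 => h0.ge) fun h1 => h1 ▸ zero_le_one
  have hsum_le (P : V → Fin m → ℝ) (hPk : ∀ v, ∑ ℓ, |P v ℓ| ≤ k) (v : V) : ∑ ℓ, P v ℓ ≤ k :=
    (le_abs_self _).trans ((abs_sum_le_sum_abs _ _).trans (hPk v))
  obtain ⟨hy, hyk⟩ := mad_iterate_nonneg_and_sum_le hW hWdiag hSnonneg (fun v => hQ v)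
    (fun v => hR v) hμ₁.le hμ₂.le hμ₃ hM hY0 hYsucc (hsum_le Q hQk) (hsum_le R hRk) t v
  exact cmEstimate_error_prob hw hd hmeas hindep hpair hy hyk hε hδ0 hwε hdδ

/-- Theorem 2 (main result): if every row of `Q` and `R` has ℓ₁-norm at most
`k`, the hash functions are independent and pairwise uniform, `w ≥ e k / ε`
and `d ≥ ln(m/δ)`, then for every node `v` and iteration `t`, with probability
at least `1 - δ`, simultaneously for every label `ℓ`,
`Y^{(t)}_{vℓ} ≤ Ŷ^{(t)}_{vℓ} ≤ Y^{(t)}_{vℓ} + ε`. -/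
theorem mad_sketch_approximation_error
    (V : Type*) [Fintype V] [DecidableEq V] (m w d : ℕ)
    (hm : 0 < m) (hw : 0 < w) (hd : 0 < d)
    (W' : V → V → ℝ) (hW : ∀ u v, 0 ≤ W' u v) (hWdiag : ∀ v, W' v v = 0)
    (S : V → ℝ) (hS : ∀ v, S v = 0 ∨ S v = 1)
    (Q R : V → Fin m → ℝ) (hQ : ∀ v ℓ, 0 ≤ Q v ℓ) (hR : ∀ v ℓ, 0 ≤ R v ℓ)
    (μ₁ μ₂ μ₃ : ℝ) (hμ₁ : 0 < μ₁) (hμ₂ : 0 < μ₂) (hμ₃ : 0 < μ₃)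
    (M : V → ℝ)
    (hM : ∀ v, M v = μ₁ * S v
        + μ₂ * ∑ u ∈ Finset.univ.filter (fun u => u ≠ v), (W' u v + W' v u)
        + μ₃)
    (Y : ℕ → V → Fin m → ℝ)
    (hY0 : Y 0 = Q)
    (hYsucc : ∀ t v ℓ, Y (t + 1) v ℓ =
        (1 / M v) * (μ₁ * S v * Q v ℓ
          + μ₂ * ∑ u, (W' u v + W' v u) * Y t u ℓ
          + μ₃ * R v ℓ))
    (k : ℝ) (hk : 0 ≤ k)
    (hQk : ∀ v, (∑ ℓ, |Q v ℓ|) ≤ k) (hRk : ∀ v, (∑ ℓ, |R v ℓ|) ≤ k)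
    {Ω : Type*} [MeasureSpace Ω] [IsProbabilityMeasure (ℙ : Measure Ω)]
    (h : Fin d → Ω → Fin m → Fin w) (hmeas : ∀ j, Measurable (h j))
    (hindep : iIndepFun h ℙ)
    (hpair : ∀ (j : Fin d) (ℓ ℓ' : Fin m), ℓ ≠ ℓ' →
        ℙ {ω | h j ω ℓ = h j ω ℓ'} ≤ 1 / w)
    (ε δ : ℝ) (hε : 0 < ε) (hδ0 : 0 < δ) (hδ1 : δ < 1)
    (hwε : Real.exp 1 * k / ε ≤ w) (hdδ : Real.log (m / δ) ≤ d) :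
    ∀ (v : V) (t : ℕ),
      1 - ENNReal.ofReal δ ≤
        ℙ {ω | ∀ ℓ : Fin m,
                Y t v ℓ ≤ cmEstimate hd (fun j => h j ω) (Y t v) ℓ ∧
                cmEstimate hd (fun j => h j ω) (Y t v) ℓ ≤ Y t v ℓ + ε} :=
  mad_sketch_approximation_error_general V m w d hw hd W' hW hWdiag S hS Q R hQ hR μ₁ μ₂ μ₃ hμ₁ hμ₂
    hμ₃ M hM Y hY0 hYsucc k hQk hRk h hmeas hindep hpair ε δ hε hδ0 hwε hdδ
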